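/- arXiv:2206.00620 — 4 statements merged into one kernel-verified Lean document; each statement's English description precedes it below -/
import Mathlib

section
/- Let θ > 0 be a real constant and let g : [0,∞) → [0,∞) be a measurable nonnegative function with g(0) = 0 and g(0+) = 0 (i.e. g tends to 0 as x tends to 0 from the right). Define I[θ,g](t) = ∫₀^∞ x^{θ−1} exp(−t·x − g(x)) dx for t > 0. Then lim_{t→∞} t^θ · I[θ,g](t) = Γ(θ), where Γ denotes the Gamma function. -/
open MeasureTheory Real Filter Set Topology

/-! Substituting `y = t x` turns `t ^ θ * I[θ,g](t)` into `∫₀^∞ y^{θ-1} exp(-y - g(y/t)) dy`.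
As `t → ∞` the integrand tends to `y^{θ-1} e^{-y}` pointwise because `g(0+) = 0`, and it is
dominated by that same function because `g ≥ 0`; dominated convergence gives `Γ(θ)`. -/

theorem rpow_mul_integral_Ioi_rpow_mul_comp_mul_left {θ t : ℝ} (ht : 0 < t) (F : ℝ → ℝ) :
    t ^ θ * ∫ x in Ioi 0, x ^ (θ - 1) * F (t * x) = ∫ y in Ioi 0, y ^ (θ - 1) * F y := by
  have h := integral_comp_mul_left_Ioi (fun y => y ^ (θ - 1) * F y) 0 ht
  have h_pull : ∫ x in Ioi 0, (t * x) ^ (θ - 1) * F (t * x)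
      = t ^ (θ - 1) * ∫ x in Ioi 0, x ^ (θ - 1) * F (t * x) := by
    rw [← integral_const_mul]
    refine setIntegral_congr_fun measurableSet_Ioi fun x hx => ?_
    rw [mul_rpow ht.le (le_of_lt hx), mul_assoc]
  rw [h_pull, mul_zero, smul_eq_mul, rpow_sub_one ht.ne'] at h
  field_simp at h
  linarith

theorem tendsto_div_atTop_nhdsGT_zero {y : ℝ} (hy : 0 < y) :
    Tendsto (fun t : ℝ => y / t) atTop (𝓝[>] 0) :=
  tendsto_nhdsWithin_of_tendsto_nhds_of_eventually_within _
    (tendsto_const_nhds.div_atTop tendsto_id)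
    (by filter_upwards [eventually_gt_atTop 0] with t ht using div_pos hy ht)

theorem integrableOn_rpow_sub_one_mul_exp_neg {θ : ℝ} (hθ : 0 < θ) :
    IntegrableOn (fun y : ℝ => y ^ (θ - 1) * exp (-y)) (Ioi 0) :=
  (GammaIntegral_convergent hθ).congr (ae_of_all _ fun _ => mul_comm _ _)

theorem Gamma_eq_integral_rpow_sub_one_mul_exp_neg {θ : ℝ} (hθ : 0 < θ) :
    Gamma θ = ∫ y in Ioi 0, y ^ (θ - 1) * exp (-y) := by
  rw [Gamma_eq_integral hθ]
  exact setIntegral_congr_fun measurableSet_Ioi fun _ _ => mul_comm _ _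

theorem tendsto_integral_rpow_mul_exp_neg_sub_comp_div {θ : ℝ} (hθ : 0 < θ) {g : ℝ → ℝ}
    (hg_meas : Measurable g) (hg_nonneg : ∀ x, 0 ≤ x → 0 ≤ g x)
    (hg_lim : Tendsto g (𝓝[>] 0) (𝓝 0)) :
    Tendsto (fun t : ℝ => ∫ y in Ioi 0, y ^ (θ - 1) * exp (-y - g (y / t)))
      atTop (𝓝 (Gamma θ)) := by
  rw [Gamma_eq_integral_rpow_sub_one_mul_exp_neg hθ]
  refine tendsto_integral_filter_of_dominated_convergence _
    (Eventually.of_forall fun t => by fun_prop) ?_ (integrableOn_rpow_sub_one_mul_exp_neg hθ) ?_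
  · filter_upwards [eventually_gt_atTop 0] with t ht
    filter_upwards [ae_restrict_mem measurableSet_Ioi] with y (hy : 0 < y)
    have hg_y : 0 ≤ g (y / t) := hg_nonneg _ (div_nonneg hy.le ht.le)
    rw [norm_mul, norm_of_nonneg (rpow_nonneg hy.le _), norm_of_nonneg (exp_pos _).le]
    gcongr
    linarith
  · filter_upwards [ae_restrict_mem measurableSet_Ioi] with y (hy : 0 < y)
    have hg_y : Tendsto (fun t => g (y / t)) atTop (𝓝 0) :=
      hg_lim.comp (tendsto_div_atTop_nhdsGT_zero hy)
    simpa using tendsto_const_nhds.mul (continuous_exp.tendsto _ |>.comp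
      (tendsto_const_nhds.sub hg_y))

theorem tail_auxiliary_integral_limit_general
    (θ : ℝ) (hθ : 0 < θ) (g : ℝ → ℝ) (hg_meas : Measurable g)
    (hg_nonneg : ∀ x, 0 ≤ x → 0 ≤ g x)
    (hg_lim : Tendsto g (nhdsWithin 0 (Ioi 0)) (nhds 0)) :
    Tendsto
      (fun t : ℝ => t ^ θ * ∫ x in Ioi (0 : ℝ), x ^ (θ - 1) * Real.exp (-(t * x) - g x))
      atTop (nhds (Real.Gamma θ)) := by
  refine (tendsto_integral_rpow_mul_exp_neg_sub_comp_div hθ hg_meas hg_nonneg hg_lim).congr' ?_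
  filter_upwards [eventually_gt_atTop 0] with t ht
  rw [← rpow_mul_integral_Ioi_rpow_mul_comp_mul_left ht]
  simp only [mul_div_cancel_left₀ _ ht.ne']

/-- Lemma 4.1: for `θ > 0` and a nonnegative measurable `g` on `[0,∞)` with
`g(0) = 0` and `g(0+) = 0`, the auxiliary integral
`I[θ,g](t) = ∫₀^∞ x^{θ-1} exp(-t x - g x) dx` satisfies
`lim_{t→∞} t^θ I[θ,g](t) = Γ(θ)`. -/
theorem tail_auxiliary_integral_limit
    (θ : ℝ) (hθ : 0 < θ) (g : ℝ → ℝ) (hg_meas : Measurable g)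
    (hg_nonneg : ∀ x, 0 ≤ x → 0 ≤ g x) (hg0 : g 0 = 0)
    (hg_lim : Tendsto g (nhdsWithin 0 (Ioi 0)) (nhds 0)) :
    Tendsto
      (fun t : ℝ => t ^ θ * ∫ x in Ioi (0 : ℝ), x ^ (θ - 1) * Real.exp (-(t * x) - g x))
      atTop (nhds (Real.Gamma θ)) :=
  tail_auxiliary_integral_limit_general θ hθ g hg_meas hg_nonneg hg_lim
end

section
/- Let α, β, κ, c₁, c₃ be positive real constants and let γ > −1. Then lim_{t→∞} t^{α(γ+1)/β} · ∫₀^∞ Q^γ · exp(−c₁ · t^α · Q^β − c₃ · Q^κ) dQ = β^{−1} · c₁^{−(γ+1)/β} · Γ((γ+1)/β), where Γ denotes the Gamma function. -/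
/-!
Substituting `Q = t^{-α/β} u` turns `t^{α(γ+1)/β} ∫ Q^γ exp(-c₁ t^α Q^β - c₃ Q^κ) dQ` into
`∫ u^γ exp(-c₁ u^β - c₃ (t^{-α/β} u)^κ) du`. As `t → ∞` the perturbation `c₃ (t^{-α/β} u)^κ`
vanishes pointwise and the integrand stays below the integrable `u^γ exp(-c₁ u^β)`, so dominated
convergence gives the limit `∫ u^γ exp(-c₁ u^β) du = β⁻¹ c₁^{-(γ+1)/β} Γ((γ+1)/β)`.
-/

open MeasureTheory Real Filter Set Topology

theorem rpow_add_one_mul_integral_Ioi_rpow_mul (γ : ℝ) {l : ℝ} (hl : 0 < l) (f : ℝ → ℝ) :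
    l ^ (γ + 1) * ∫ Q in Ioi (0 : ℝ), Q ^ γ * f Q = ∫ u in Ioi (0 : ℝ), u ^ γ * f (l⁻¹ * u) := by
  have hsub := integral_comp_mul_left_Ioi' (fun u => u ^ γ * f (l⁻¹ * u)) 0 hl
  rw [mul_zero] at hsub
  rw [← hsub, smul_eq_mul, rpow_add_one hl.ne', mul_comm (l ^ γ), mul_assoc,
    ← integral_const_mul]
  congr 1
  refine setIntegral_congr_fun measurableSet_Ioi fun Q (hQ : 0 < Q) => ?_
  rw [mul_rpow hl.le hQ.le, inv_mul_cancel_left₀ hl.ne', mul_assoc]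

theorem tendsto_integral_Ioi_rpow_mul_exp_neg_sub_rpow {β γ κ c₁ c₃ : ℝ} (hβ : 0 < β)
    (hγ : -1 < γ) (hκ : 0 < κ) (hc₁ : 0 < c₁) (hc₃ : 0 ≤ c₃) :
    Tendsto (fun s => ∫ u in Ioi (0 : ℝ), u ^ γ * exp (-c₁ * u ^ β - c₃ * (s * u) ^ κ))
      (𝓝[>] 0) (𝓝 (∫ u in Ioi (0 : ℝ), u ^ γ * exp (-c₁ * u ^ β))) := by
  refine tendsto_integral_filter_of_dominated_convergence _ ?_ ?_
    (integrableOn_rpow_mul_exp_neg_mul_rpow hγ hβ hc₁) ?_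
  · exact Eventually.of_forall fun s => by fun_prop
  · filter_upwards [self_mem_nhdsWithin] with s (hs : 0 < s)
    filter_upwards [ae_restrict_mem measurableSet_Ioi] with u (hu : 0 < u)
    have hpert : 0 ≤ c₃ * (s * u) ^ κ := by positivity
    rw [norm_mul, norm_of_nonneg (rpow_nonneg hu.le _), norm_of_nonneg (exp_pos _).le]
    gcongr
    linarith
  · refine Eventually.of_forall fun u => tendsto_nhdsWithin_of_tendsto_nhds ?_
    have hpert : Tendsto (fun s : ℝ => (s * u) ^ κ) (𝓝 0) (𝓝 0) := by
      simpa [zero_rpow hκ.ne'] using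
        ((continuous_id.mul continuous_const).rpow_const fun _ => Or.inr hκ.le).tendsto 0
    simpa using ((hpert.const_mul c₃).const_sub (-c₁ * u ^ β)).rexp.const_mul (u ^ γ)

theorem rpow_mul_integral_Ioi_rpow_mul_exp_eq {α β γ κ c₁ c₃ t : ℝ} (hβ : 0 < β) (ht : 0 < t) :
    t ^ (α * (γ + 1) / β) *
        ∫ Q in Ioi (0 : ℝ), Q ^ γ * exp (-(c₁ * t ^ α * Q ^ β) - c₃ * Q ^ κ) =
      ∫ u in Ioi (0 : ℝ), u ^ γ * exp (-c₁ * u ^ β - c₃ * ((t ^ (α / β))⁻¹ * u) ^ κ) := by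
  rw [show α * (γ + 1) / β = α / β * (γ + 1) by ring, rpow_mul ht.le,
    rpow_add_one_mul_integral_Ioi_rpow_mul γ (rpow_pos_of_pos ht _)]
  refine setIntegral_congr_fun measurableSet_Ioi fun u (hu : 0 < u) => ?_
  have hscale : t ^ α * ((t ^ (α / β))⁻¹ * u) ^ β = u ^ β := by
    rw [← rpow_neg ht.le, mul_rpow (rpow_nonneg ht.le _) hu.le, ← rpow_mul ht.le,
      neg_mul, div_mul_cancel₀ _ hβ.ne', ← mul_assoc, ← rpow_add ht, add_neg_cancel,
      rpow_zero, one_mul]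
  rw [mul_assoc c₁, hscale, neg_mul]

/-- Asymptotics in Example 4.1:
`lim_{t→∞} t^{α(γ+1)/β} ∫₀^∞ Q^γ exp(-c₁ t^α Q^β - c₃ Q^κ) dQ
  = β⁻¹ c₁^{-(γ+1)/β} Γ((γ+1)/β)`. -/
theorem example41_mixture_integral_limit
    (α β κ c₁ c₃ γ : ℝ) (hα : 0 < α) (hβ : 0 < β) (hκ : 0 < κ)
    (hc₁ : 0 < c₁) (hc₃ : 0 < c₃) (hγ : -1 < γ) :
    Tendsto
      (fun t : ℝ => t ^ (α * (γ + 1) / β) *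
        ∫ Q in Ioi (0 : ℝ), Q ^ γ * Real.exp (-(c₁ * t ^ α * Q ^ β) - c₃ * Q ^ κ))
      atTop
      (nhds (β⁻¹ * c₁ ^ (-((γ + 1) / β)) * Real.Gamma ((γ + 1) / β))) := by
  have hscale : Tendsto (fun t : ℝ => (t ^ (α / β))⁻¹) atTop (𝓝[>] 0) :=
    tendsto_inv_atTop_nhdsGT_zero.comp (tendsto_rpow_atTop (div_pos hα hβ))
  have hlim := (tendsto_integral_Ioi_rpow_mul_exp_neg_sub_rpow hβ hγ hκ hc₁ hc₃.le).comp hscale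
  rw [integral_rpow_mul_exp_neg_mul_rpow hβ hγ hc₁, neg_div, one_div] at hlim
  rw [mul_comm β⁻¹]
  refine hlim.congr' ?_
  filter_upwards [eventually_gt_atTop 0] with t ht
  exact (rpow_mul_integral_Ioi_rpow_mul_exp_eq hβ ht).symm
end

section
/- Let α, β, κ, c₁, c₂, c₃ be positive real constants and let γ > −1. Define R₀(t) = c₂ · ∫₀^∞ Q^γ · exp(−c₁ · t^α · Q^{−β} − c₃ · Q^κ) dQ for t ≥ 1. Then there exist constants c₆, c₇ ∈ (0,∞), depending only on α, β, κ, γ, c₁, c₂, c₃, such that for all t ≥ 1: R₀(t) ≤ c₆ · exp(−c₇ · t^{ακ/(β+κ)}) (an exponential tail decay). -/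
/-!
Writing `s = t ^ α`, weighted AM-GM with weights `κ/(β+κ)` and `β/(β+κ)` gives
`s ^ (κ/(β+κ)) ≤ s Q^(-β) + Q^κ` for every `Q > 0`, the weights being chosen so that `Q`
cancels from the weighted geometric mean of the two terms. Hence the
exponent of the integrand is at least `c₇ t^(ακ/(β+κ)) + (c₃/2) Q^κ` with
`c₇ = min c₁ (c₃/2)`, and the remaining factor `Q^γ exp(-(c₃/2) Q^κ)` is integrable
on `(0, ∞)` because `γ > -1`.
-/

open MeasureTheory Real Set

lemma rpow_div_add_le_mul_rpow_neg_add_rpow {s Q β κ : ℝ} (hs : 0 ≤ s) (hQ : 0 < Q)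
    (hβ : 0 ≤ β) (hκ : 0 ≤ κ) (hβκ : 0 < β + κ) :
    s ^ (κ / (β + κ)) ≤ s * Q ^ (-β) + Q ^ κ := by
  set w₁ := κ / (β + κ)
  set w₂ := β / (β + κ)
  have hw₁ : 0 ≤ w₁ := div_nonneg hκ hβκ.le
  have hw₂ : 0 ≤ w₂ := div_nonneg hβ hβκ.le
  have hw : w₁ + w₂ = 1 := by
    simp only [w₁, w₂]
    field_simp
    ring
  have hQ_cancel : (Q ^ (-β)) ^ w₁ * (Q ^ κ) ^ w₂ = 1 := by
    rw [← rpow_mul hQ.le, ← rpow_mul hQ.le, ← rpow_add hQ]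
    convert rpow_zero Q using 2
    simp only [w₁, w₂]
    field_simp
    ring
  calc s ^ w₁ = (s * Q ^ (-β)) ^ w₁ * (Q ^ κ) ^ w₂ := by
        rw [mul_rpow hs (by positivity), mul_assoc, hQ_cancel, mul_one]
    _ ≤ w₁ * (s * Q ^ (-β)) + w₂ * Q ^ κ :=
        geom_mean_le_arith_mean2_weighted hw₁ hw₂ (by positivity) (by positivity) hw
    _ ≤ s * Q ^ (-β) + Q ^ κ :=
        add_le_add (mul_le_of_le_one_left (by positivity) (by linarith))
          (mul_le_of_le_one_left (by positivity) (by linarith))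

lemma exp_neg_mul_rpow_neg_sub_le {a b s Q β κ : ℝ} (ha : 0 ≤ a) (hb : 0 ≤ b) (hs : 0 ≤ s)
    (hQ : 0 < Q) (hβ : 0 ≤ β) (hκ : 0 ≤ κ) (hβκ : 0 < β + κ) :
    exp (-(a * s * Q ^ (-β)) - b * Q ^ κ) ≤
      exp (-(min a (b / 2) * s ^ (κ / (β + κ)))) * exp (-(b / 2) * Q ^ κ) := by
  rw [← exp_add, exp_le_exp]
  have h_amgm := rpow_div_add_le_mul_rpow_neg_add_rpow hs hQ hβ hκ hβκ
  have h_min : min a (b / 2) * (s * Q ^ (-β) + Q ^ κ) ≤ a * (s * Q ^ (-β)) + b / 2 * Q ^ κ := by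
    rw [mul_add]
    gcongr
    exacts [min_le_left _ _, min_le_right _ _]
  have h_scaled : min a (b / 2) * s ^ (κ / (β + κ)) ≤ min a (b / 2) * (s * Q ^ (-β) + Q ^ κ) :=
    mul_le_mul_of_nonneg_left h_amgm (le_min ha (by positivity))
  linarith

lemma setIntegral_rpow_mul_exp_le {a b s β κ γ : ℝ} (ha : 0 ≤ a) (hb : 0 < b) (hs : 0 ≤ s)
    (hβ : 0 ≤ β) (hκ : 0 < κ) (hγ : -1 < γ) :
    ∫ Q in Ioi 0, Q ^ γ * exp (-(a * s * Q ^ (-β)) - b * Q ^ κ) ≤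
      exp (-(min a (b / 2) * s ^ (κ / (β + κ)))) *
        ∫ Q in Ioi 0, Q ^ γ * exp (-(b / 2) * Q ^ κ) := by
  rw [← integral_const_mul]
  refine integral_mono_of_nonneg ?_
    ((integrableOn_rpow_mul_exp_neg_mul_rpow hγ hκ (half_pos hb)).const_mul _) ?_ <;>
    filter_upwards [ae_restrict_mem measurableSet_Ioi] with Q (hQ : 0 < Q)
  · positivity
  · calc Q ^ γ * exp (-(a * s * Q ^ (-β)) - b * Q ^ κ)
        ≤ Q ^ γ * (exp (-(min a (b / 2) * s ^ (κ / (β + κ)))) * exp (-(b / 2) * Q ^ κ)) := by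
          gcongr
          exact exp_neg_mul_rpow_neg_sub_le ha hb.le hs hQ hβ hκ.le (by linarith)
      _ = _ := by ring

theorem example42_exponential_tail_decay_general
    (α β κ c₁ c₂ c₃ γ : ℝ) (hβ : 0 < β) (hκ : 0 < κ)
    (hc₁ : 0 < c₁) (hc₂ : 0 < c₂) (hc₃ : 0 < c₃) (hγ : -1 < γ) :
    ∃ c₆ : ℝ, 0 < c₆ ∧ ∃ c₇ : ℝ, 0 < c₇ ∧ ∀ t : ℝ, 1 ≤ t →
      c₂ * (∫ Q in Ioi (0 : ℝ), Q ^ γ * Real.exp (-(c₁ * t ^ α * Q ^ (-β)) - c₃ * Q ^ κ))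
        ≤ c₆ * Real.exp (-(c₇ * t ^ (α * κ / (β + κ)))) := by
  set I := ∫ Q in Ioi (0 : ℝ), Q ^ γ * exp (-(c₃ / 2) * Q ^ κ)
  have hI : 0 ≤ I := setIntegral_nonneg measurableSet_Ioi fun Q (hQ : 0 < Q) => by positivity
  refine ⟨c₂ * (I + 1), by positivity, min c₁ (c₃ / 2), by positivity, fun t ht => ?_⟩
  have ht₀ : 0 ≤ t := by linarith
  rw [mul_div_assoc, rpow_mul ht₀]
  calc c₂ * ∫ Q in Ioi 0, Q ^ γ * exp (-(c₁ * t ^ α * Q ^ (-β)) - c₃ * Q ^ κ)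
      ≤ c₂ * (exp (-(min c₁ (c₃ / 2) * (t ^ α) ^ (κ / (β + κ)))) * I) :=
        mul_le_mul_of_nonneg_left (setIntegral_rpow_mul_exp_le hc₁.le hc₃
          (rpow_nonneg ht₀ α) hβ.le hκ hγ) hc₂.le
    _ ≤ c₂ * (I + 1) * exp (-(min c₁ (c₃ / 2) * (t ^ α) ^ (κ / (β + κ)))) := by
        rw [mul_comm (exp _), mul_assoc]
        gcongr
        linarith

/-- Estimate (27) of the paper (Example 4.2): an exponential tail decay.
For `R₀(t) = c₂ ∫₀^∞ Q^γ exp(-c₁ t^α Q^{-β} - c₃ Q^κ) dQ` there are constants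
`c₆, c₇ ∈ (0,∞)` with `R₀(t) ≤ c₆ exp(-c₇ t^{ακ/(β+κ)})` for all `t ≥ 1`. -/
theorem example42_exponential_tail_decay
    (α β κ c₁ c₂ c₃ γ : ℝ) (hα : 0 < α) (hβ : 0 < β) (hκ : 0 < κ)
    (hc₁ : 0 < c₁) (hc₂ : 0 < c₂) (hc₃ : 0 < c₃) (hγ : -1 < γ) :
    ∃ c₆ : ℝ, 0 < c₆ ∧ ∃ c₇ : ℝ, 0 < c₇ ∧ ∀ t : ℝ, 1 ≤ t →
      c₂ * (∫ Q in Ioi (0 : ℝ), Q ^ γ * Real.exp (-(c₁ * t ^ α * Q ^ (-β)) - c₃ * Q ^ κ))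
        ≤ c₆ * Real.exp (-(c₇ * t ^ (α * κ / (β + κ)))) :=
  example42_exponential_tail_decay_general α β κ c₁ c₂ c₃ γ hβ hκ hc₁ hc₂ hc₃ hγ
end

section
/- Let α, β, κ, c₁, c₂, c₃ be positive real constants and let γ > −1. Define R₀(t) = c₂ · ∫₀^∞ Q^γ · exp(−c₁ · t^α · Q^{−β} − c₃ · Q^κ) dQ. Then the exponential estimate of Example 4.2 is logarithmically exact: lim_{t→∞} (−log R₀(t)) / t^{ακ/(β+κ)} = ((β+κ)/(βκ)) · (c₁^κ · c₃^β · β^κ · κ^β)^{1/(β+κ)}; equivalently, the limit equals c₁₀ · (A^{−1} + B^{−1}), where A = β/(γ+1), B = κ/(γ+1) and c₁₀ = (γ+1)^{−1} · (c₁^κ c₃^β β^κ κ^β)^{1/(β+κ)}. -/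
/-!
Write `φ(q) = c₁ q^{-β} + c₃ q^κ` and `ρ = ακ/(β+κ)`. The substitution `Q = t^{α/(β+κ)} q` gives
`R₀(t) = c₂ t^{α(γ+1)/(β+κ)} ∫₀^∞ q^γ exp(-t^ρ φ(q)) dq`, and the power prefactor is negligible on
the scale `t^ρ`. What remains is the Laplace principle at logarithmic scale,
`-log ∫ g exp(-τ φ) / τ → inf φ` as `τ → ∞`: from above, `exp(-τ φ) ≤ exp(-(τ-1) inf φ) exp(-φ)`;
from below, restrict the integral to an interval on which `φ` is within `ε` of its infimum.
Weighted AM-GM with weights `κ/(β+κ)`, `β/(β+κ)` identifies `inf φ` with the stated constant; it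
is attained where the two weighted terms agree.
-/

open MeasureTheory Real Filter Set Topology

section LaplaceLog

variable {X : Type*} [MeasurableSpace X] {μ : Measure X} {f g : X → ℝ} {L M τ : ℝ}

theorem integrable_mul_exp_neg_mul (hf : AEStronglyMeasurable f μ) (hfL : ∀ᵐ x ∂μ, L ≤ f x)
    (hint : Integrable (fun x => g x * exp (-f x)) μ) (hτ : 1 ≤ τ) :
    Integrable (fun x => g x * exp (-(τ * f x))) μ := by
  have hsplit : (fun x => g x * exp (-(τ * f x)))
      = fun x => g x * exp (-f x) * exp (-((τ - 1) * f x)) := by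
    ext x; rw [mul_assoc, ← exp_add]; ring_nf
  rw [hsplit]
  refine hint.mul_bdd (c := exp (-((τ - 1) * L)))
    (continuous_exp.comp_aestronglyMeasurable ((hf.const_mul _).neg)) ?_
  filter_upwards [hfL] with x hx
  rw [norm_of_nonneg (exp_pos _).le, exp_le_exp]
  nlinarith

theorem integral_mul_exp_neg_mul_le (hg : 0 ≤ᵐ[μ] g) (hfL : ∀ᵐ x ∂μ, L ≤ f x)
    (hint : Integrable (fun x => g x * exp (-f x)) μ)
    (hτint : Integrable (fun x => g x * exp (-(τ * f x))) μ) (hτ : 1 ≤ τ) :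
    ∫ x, g x * exp (-(τ * f x)) ∂μ ≤ exp (-((τ - 1) * L)) * ∫ x, g x * exp (-f x) ∂μ := by
  rw [← integral_const_mul]
  refine integral_mono_ae hτint (hint.const_mul _) ?_
  filter_upwards [hg, hfL] with x hgx hx
  have hexp : exp (-(τ * f x)) ≤ exp (-((τ - 1) * L)) * exp (-f x) := by
    rw [← exp_add, exp_le_exp]; nlinarith
  calc g x * exp (-(τ * f x)) ≤ g x * (exp (-((τ - 1) * L)) * exp (-f x)) :=
        mul_le_mul_of_nonneg_left hexp hgx
    _ = _ := by ring

theorem exp_neg_mul_mul_setIntegral_le_integral {s : Set X} (hs : MeasurableSet s)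
    (hsM : ∀ x ∈ s, f x ≤ M) (hg : 0 ≤ᵐ[μ] g) (hgs : IntegrableOn g s μ)
    (hτint : Integrable (fun x => g x * exp (-(τ * f x))) μ) (hτ : 0 ≤ τ) :
    exp (-(τ * M)) * ∫ x in s, g x ∂μ ≤ ∫ x, g x * exp (-(τ * f x)) ∂μ := by
  have hnonneg : 0 ≤ᵐ[μ] fun x => g x * exp (-(τ * f x)) := by
    filter_upwards [hg] with x hx using mul_nonneg hx (exp_pos _).le
  calc exp (-(τ * M)) * ∫ x in s, g x ∂μ = ∫ x in s, g x * exp (-(τ * M)) ∂μ := by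
        rw [integral_mul_const, mul_comm]
    _ ≤ ∫ x in s, g x * exp (-(τ * f x)) ∂μ := by
        refine setIntegral_mono_on_ae (hgs.mul_const _) hτint.integrableOn hs ?_
        filter_upwards [hg] with x hgx hx
        exact mul_le_mul_of_nonneg_left (exp_le_exp.2 (by nlinarith [hsM x hx])) hgx
    _ ≤ ∫ x, g x * exp (-(τ * f x)) ∂μ := setIntegral_le_integral hτint hnonneg

theorem setIntegral_pos_of_forall_pos {s : Set X} (hs : MeasurableSet s) (hμs : 0 < μ s)
    (hgs : IntegrableOn g s μ) (hpos : ∀ x ∈ s, 0 < g x) : 0 < ∫ x in s, g x ∂μ := by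
  rw [setIntegral_pos_iff_support_of_nonneg_ae
    (ae_restrict_of_forall_mem hs fun x hx => (hpos x hx).le) hgs]
  exact hμs.trans_le (measure_mono fun x hx => ⟨(hpos x hx).ne', hx⟩)

theorem tendsto_neg_log_integral_mul_exp_neg_mul_div (hf : AEStronglyMeasurable f μ)
    (hg : 0 ≤ᵐ[μ] g) (hfL : ∀ᵐ x ∂μ, L ≤ f x) (hint : Integrable (fun x => g x * exp (-f x)) μ)
    (hM : ∀ M > L, ∃ s, MeasurableSet s ∧ (∀ x ∈ s, f x ≤ M) ∧ 0 < ∫ x in s, g x ∂μ) :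
    Tendsto (fun τ => -log (∫ x, g x * exp (-(τ * f x)) ∂μ) / τ) atTop (𝓝 L) := by
  set I := fun τ => ∫ x, g x * exp (-(τ * f x)) ∂μ
  have hτint : ∀ τ, 1 ≤ τ → Integrable (fun x => g x * exp (-(τ * f x))) μ :=
    fun τ hτ => integrable_mul_exp_neg_mul hf hfL hint hτ
  have hupper : ∀ M > L, ∃ C, ∀ τ, 1 ≤ τ → 0 < I τ ∧ -log (I τ) / τ ≤ M - C / τ := by
    intro M hLM
    obtain ⟨s, hs, hsM, hpos⟩ := hM M hLM
    refine ⟨log (∫ x in s, g x ∂μ), fun τ hτ => ?_⟩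
    have hle := exp_neg_mul_mul_setIntegral_le_integral hs hsM hg
      (Integrable.of_integral_ne_zero hpos.ne') (hτint τ hτ) (by linarith)
    have hlow : 0 < exp (-(τ * M)) * ∫ x in s, g x ∂μ := by positivity
    refine ⟨hlow.trans_le hle, ?_⟩
    have hlog := log_le_log hlow hle
    rw [log_mul (exp_ne_zero _) hpos.ne', log_exp] at hlog
    rw [div_le_iff₀ (by linarith), sub_mul, div_mul_cancel₀ _ (by linarith)]
    linarith
  obtain ⟨C, hC⟩ := hupper (L + 1) (by linarith)
  set J := ∫ x, g x * exp (-f x) ∂μ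
  have hlower : ∀ τ, 1 ≤ τ → L - (L + log J) / τ ≤ -log (I τ) / τ := by
    intro τ hτ
    have hle := integral_mul_exp_neg_mul_le hg hfL hint (hτint τ hτ) hτ
    have hIpos := (hC τ hτ).1
    have hJ : 0 < J := pos_of_mul_pos_right (hIpos.trans_le hle) (exp_pos _).le
    have hlog := log_le_log hIpos hle
    rw [log_mul (exp_ne_zero _) hJ.ne', log_exp] at hlog
    rw [le_div_iff₀ (by linarith), sub_mul, div_mul_cancel₀ _ (by linarith)]
    linarith
  have hlim : ∀ M C : ℝ, Tendsto (fun τ : ℝ => M - C / τ) atTop (𝓝 M) := fun M C => by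
    simpa using (tendsto_const_nhds (x := C)).div_atTop tendsto_id |>.const_sub M
  refine tendsto_order.2 ⟨fun a ha => ?_, fun a ha => ?_⟩
  · have := (hlim L (L + log J)).eventually (lt_mem_nhds ha)
    filter_upwards [this, eventually_ge_atTop 1] with τ h1 h2
    exact h1.trans_le (hlower τ h2)
  · obtain ⟨C', hC'⟩ := hupper ((L + a) / 2) (by linarith)
    have := (hlim ((L + a) / 2) C').eventually (gt_mem_nhds (by linarith : (L + a) / 2 < a))
    filter_upwards [this, eventually_ge_atTop 1] with τ h1 h2
    exact ((hC' τ h2).2).trans_lt h1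

end LaplaceLog

theorem exists_Ioc_subset_forall_le_setIntegral_pos {f g : ℝ → ℝ} {U : Set ℝ} (hU : IsOpen U)
    (hf : ContinuousOn f U) (hg : ContinuousOn g U) (hgpos : ∀ x ∈ U, 0 < g x) {x₀ M : ℝ}
    (hx₀ : x₀ ∈ U) (hM : f x₀ < M) :
    ∃ a b, Ioc a b ⊆ U ∧ (∀ x ∈ Ioc a b, f x ≤ M) ∧ 0 < ∫ x in Ioc a b, g x := by
  have hV : U ∩ f ⁻¹' Iio M ∈ 𝓝 x₀ := (hf.isOpen_inter_preimage hU isOpen_Iio).mem_nhds ⟨hx₀, hM⟩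
  obtain ⟨l, u, ⟨hl, hu⟩, hlu⟩ := mem_nhds_iff_exists_Ioo_subset.1 hV
  have hIcc : Icc x₀ ((x₀ + u) / 2) ⊆ U ∩ f ⁻¹' Iio M :=
    fun x hx => hlu ⟨hl.trans_le hx.1, hx.2.trans_lt (by linarith)⟩
  have hIoc : Ioc x₀ ((x₀ + u) / 2) ⊆ U ∩ f ⁻¹' Iio M := Ioc_subset_Icc_self.trans hIcc
  have hab : x₀ < (x₀ + u) / 2 := by linarith
  refine ⟨x₀, (x₀ + u) / 2, fun x hx => (hIoc hx).1, fun x hx => (hIoc hx).2.le, ?_⟩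
  rw [← intervalIntegral.integral_of_le hab.le]
  refine intervalIntegral.intervalIntegral_pos_of_pos_on ?_
    (fun x hx => hgpos x (hIcc (Ioo_subset_Icc_self hx)).1) hab
  exact (hg.mono ((uIcc_of_le hab.le).symm ▸ fun x hx => (hIcc hx).1)).intervalIntegrable

noncomputable def rpowPhase (c₁ β c₃ κ q : ℝ) : ℝ := c₁ * q ^ (-β) + c₃ * q ^ κ

section RpowPhase

variable {β κ c₁ c₃ γ : ℝ}

theorem continuousOn_rpowPhase : ContinuousOn (rpowPhase c₁ β c₃ κ) (Ioi 0) := by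
  intro q hq
  have hq : q ≠ 0 := (mem_Ioi.1 hq).ne'
  exact ((continuousAt_const.mul (continuousAt_rpow_const _ _ (Or.inl hq))).add
    (continuousAt_const.mul (continuousAt_rpow_const _ _ (Or.inl hq)))).continuousWithinAt

theorem geom_mean_weighted_rpowPhase_terms_eq (hβ : 0 < β) (hκ : 0 < κ) (hc₁ : 0 < c₁)
    (hc₃ : 0 < c₃) {q : ℝ} (hq : 0 < q) :
    (c₁ * q ^ (-β) / (κ / (β + κ))) ^ (κ / (β + κ)) * (c₃ * q ^ κ / (β / (β + κ))) ^ (β / (β + κ))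
      = (β + κ) / (β * κ) * (c₁ ^ κ * c₃ ^ β * β ^ κ * κ ^ β) ^ ((1 : ℝ) / (β + κ)) := by
  have hβκ : 0 < β + κ := by linarith
  refine log_injOn_pos (mem_Ioi.2 (by positivity)) (mem_Ioi.2 (by positivity)) ?_
  simp (disch := positivity) only [log_mul, log_div, log_rpow]
  field_simp
  ring

theorem le_rpowPhase (hβ : 0 < β) (hκ : 0 < κ) (hc₁ : 0 < c₁) (hc₃ : 0 < c₃) {q : ℝ}
    (hq : 0 < q) :
    (β + κ) / (β * κ) * (c₁ ^ κ * c₃ ^ β * β ^ κ * κ ^ β) ^ ((1 : ℝ) / (β + κ))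
      ≤ rpowPhase c₁ β c₃ κ q := by
  have hβκ : 0 < β + κ := by linarith
  rw [← geom_mean_weighted_rpowPhase_terms_eq hβ hκ hc₁ hc₃ hq]
  refine (geom_mean_le_arith_mean2_weighted (p₁ := c₁ * q ^ (-β) / (κ / (β + κ)))
    (p₂ := c₃ * q ^ κ / (β / (β + κ))) (by positivity) (by positivity) (by positivity)
    (by positivity) (by field_simp; ring)).trans_eq ?_
  rw [rpowPhase]
  field_simp

theorem exists_rpowPhase_eq (hβ : 0 < β) (hκ : 0 < κ) (hc₁ : 0 < c₁) (hc₃ : 0 < c₃) :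
    ∃ q > 0, rpowPhase c₁ β c₃ κ q
      = (β + κ) / (β * κ) * (c₁ ^ κ * c₃ ^ β * β ^ κ * κ ^ β) ^ ((1 : ℝ) / (β + κ)) := by
  have hβκ : 0 < β + κ := by linarith
  have hw : κ / (β + κ) + β / (β + κ) = 1 := by field_simp; ring
  set q := (β * c₁ / (κ * c₃)) ^ (β + κ)⁻¹
  have hq : 0 < q := by positivity
  -- at this `q` the two terms of the weighted AM-GM inequality coincide, so it is an equality
  have hbalance : c₃ * q ^ κ / (β / (β + κ)) = c₁ * q ^ (-β) / (κ / (β + κ)) := by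
    have hqκ : q ^ κ = β * c₁ / (κ * c₃) * q ^ (-β) := by
      rw [← rpow_inv_rpow (by positivity : 0 ≤ β * c₁ / (κ * c₃)) hβκ.ne', ← rpow_add hq]
      ring_nf
    rw [hqκ]
    field_simp
  refine ⟨q, hq, ?_⟩
  rw [← geom_mean_weighted_rpowPhase_terms_eq hβ hκ hc₁ hc₃ hq, hbalance,
    ← rpow_add (by positivity), hw, rpow_one, rpowPhase]
  rw [div_eq_iff (by positivity)] at hbalance
  rw [hbalance]
  field_simp
  ring

theorem rpowPhase_mul_rpow_mul {α t q : ℝ} (hβκ : β + κ ≠ 0) (ht : 0 < t) (hq : 0 < q) :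
    rpowPhase (c₁ * t ^ α) β c₃ κ (t ^ (α / (β + κ)) * q)
      = t ^ (α * κ / (β + κ)) * rpowPhase c₁ β c₃ κ q := by
  have hneg : t ^ α * t ^ (α / (β + κ) * -β) = t ^ (α * κ / (β + κ)) := by
    rw [← rpow_add ht]; congr 1; field_simp; ring
  have hpos : t ^ (α / (β + κ) * κ) = t ^ (α * κ / (β + κ)) := by rw [div_mul_eq_mul_div]
  rw [rpowPhase, rpowPhase, mul_rpow (by positivity) hq.le, mul_rpow (by positivity) hq.le,
    ← rpow_mul ht.le, ← rpow_mul ht.le]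
  linear_combination c₁ * q ^ (-β) * hneg + c₃ * q ^ κ * hpos

theorem integral_rpow_mul_exp_neg_eq_rpow_mul_integral {α t : ℝ} (hβκ : β + κ ≠ 0)
    (ht : 0 < t) :
    ∫ Q in Ioi (0 : ℝ), Q ^ γ * exp (-(c₁ * t ^ α * Q ^ (-β)) - c₃ * Q ^ κ)
      = (t ^ (α / (β + κ))) ^ (γ + 1) *
        ∫ q in Ioi (0 : ℝ), q ^ γ * exp (-(t ^ (α * κ / (β + κ)) * rpowPhase c₁ β c₃ κ q)) := by
  set b := t ^ (α / (β + κ))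
  have hb : 0 < b := by positivity
  have hsubst := integral_comp_mul_left_Ioi'
    (fun Q : ℝ => Q ^ γ * exp (-rpowPhase (c₁ * t ^ α) β c₃ κ Q)) 0 hb
  rw [mul_zero] at hsubst
  simp only [rpowPhase, neg_add'] at hsubst
  rw [← hsubst, smul_eq_mul, rpow_add hb, rpow_one, mul_comm (b ^ γ), mul_assoc]
  congr 1
  rw [← integral_const_mul]
  refine setIntegral_congr_fun measurableSet_Ioi fun q (hq : 0 < q) => ?_
  rw [← neg_add', ← rpowPhase, rpowPhase_mul_rpow_mul hβκ ht hq, mul_rpow hb.le hq.le]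
  ring

theorem integrableOn_rpow_mul_exp_neg_mul_rpowPhase (hκ : 0 < κ) (hc₁ : 0 < c₁)
    (hc₃ : 0 < c₃) (hγ : -1 < γ) {τ : ℝ} (hτ : 0 < τ) :
    IntegrableOn (fun q => q ^ γ * exp (-(τ * rpowPhase c₁ β c₃ κ q))) (Ioi 0) := by
  refine (integrableOn_rpow_mul_exp_neg_mul_rpow hγ hκ (mul_pos hτ hc₃)).mono' ?_ ?_
  · exact ((continuousOn_id.rpow_const fun q hq => Or.inl (mem_Ioi.1 hq).ne').mul
      (continuous_exp.comp_continuousOn (continuousOn_const.mul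
        continuousOn_rpowPhase).neg)).aestronglyMeasurable measurableSet_Ioi
  · refine ae_restrict_of_forall_mem measurableSet_Ioi fun q (hq : 0 < q) => ?_
    have hexp : -(τ * rpowPhase c₁ β c₃ κ q) ≤ -(τ * c₃) * q ^ κ := by
      rw [rpowPhase]
      nlinarith [mul_pos hτ (mul_pos hc₁ (rpow_pos_of_pos hq (-β)))]
    rw [norm_of_nonneg (by positivity)]
    exact mul_le_mul_of_nonneg_left (exp_le_exp.2 hexp) (by positivity)

theorem tendsto_neg_log_integral_rpow_mul_exp_neg_mul_rpowPhase_div (hβ : 0 < β) (hκ : 0 < κ)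
    (hc₁ : 0 < c₁) (hc₃ : 0 < c₃) (hγ : -1 < γ) :
    Tendsto (fun τ => -log (∫ q in Ioi (0 : ℝ), q ^ γ * exp (-(τ * rpowPhase c₁ β c₃ κ q))) / τ)
      atTop
      (𝓝 ((β + κ) / (β * κ) * (c₁ ^ κ * c₃ ^ β * β ^ κ * κ ^ β) ^ ((1 : ℝ) / (β + κ)))) := by
  have hrpow : ContinuousOn (fun q : ℝ => q ^ γ) (Ioi 0) :=
    continuousOn_id.rpow_const fun q hq => Or.inl (mem_Ioi.1 hq).ne'
  have hint := integrableOn_rpow_mul_exp_neg_mul_rpowPhase (β := β) hκ hc₁ hc₃ hγ one_pos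
  simp only [one_mul] at hint
  refine tendsto_neg_log_integral_mul_exp_neg_mul_div
    (continuousOn_rpowPhase.aestronglyMeasurable measurableSet_Ioi)
    (ae_restrict_of_forall_mem measurableSet_Ioi fun q (hq : 0 < q) => by positivity)
    (ae_restrict_of_forall_mem measurableSet_Ioi fun q hq => le_rpowPhase hβ hκ hc₁ hc₃ hq)
    hint ?_
  intro M hM
  obtain ⟨q₀, hq₀, hmin⟩ := exists_rpowPhase_eq hβ hκ hc₁ hc₃
  obtain ⟨a, b, hsub, hle, hpos⟩ := exists_Ioc_subset_forall_le_setIntegral_pos isOpen_Ioi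
    continuousOn_rpowPhase hrpow (fun q (hq : 0 < q) => by positivity) hq₀ (hmin ▸ hM)
  exact ⟨Ioc a b, measurableSet_Ioc, hle, by rwa [Measure.restrict_restrict_of_subset hsub]⟩

end RpowPhase

/-- Logarithmic exactness of the exponential estimate of Example 4.2:
`lim_{t→∞} (-log R₀(t)) / t^{ακ/(β+κ)} = ((β+κ)/(βκ)) (c₁^κ c₃^β β^κ κ^β)^{1/(β+κ)}`,
where `R₀(t) = c₂ ∫₀^∞ Q^γ exp(-c₁ t^α Q^{-β} - c₃ Q^κ) dQ`. -/
theorem example42_log_exact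
    (α β κ c₁ c₂ c₃ γ : ℝ) (hα : 0 < α) (hβ : 0 < β) (hκ : 0 < κ)
    (hc₁ : 0 < c₁) (hc₂ : 0 < c₂) (hc₃ : 0 < c₃) (hγ : -1 < γ) :
    Tendsto
      (fun t : ℝ =>
        (-Real.log (c₂ *
          ∫ Q in Ioi (0 : ℝ), Q ^ γ * Real.exp (-(c₁ * t ^ α * Q ^ (-β)) - c₃ * Q ^ κ)))
          / t ^ (α * κ / (β + κ)))
      atTop
      (nhds (((β + κ) / (β * κ)) *
        (c₁ ^ κ * c₃ ^ β * β ^ κ * κ ^ β) ^ ((1 : ℝ) / (β + κ)))) := by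
  have hβκ : 0 < β + κ := by linarith
  set ρ := α * κ / (β + κ)
  have hρ : 0 < ρ := by positivity
  have hmain := (tendsto_neg_log_integral_rpow_mul_exp_neg_mul_rpowPhase_div hβ hκ hc₁ hc₃ hγ).comp
    (tendsto_rpow_atTop hρ)
  have hprefactor : Tendsto (fun t => -(log c₂ + (γ + 1) * (α / (β + κ)) * log t) / t ^ ρ)
      atTop (𝓝 0) := by
    have := ((isLittleO_log_rpow_atTop hρ).tendsto_div_nhds_zero.const_mul
      ((γ + 1) * (α / (β + κ)))).add
      ((tendsto_const_nhds (x := log c₂)).div_atTop (tendsto_rpow_atTop hρ))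
    simpa [neg_div, add_div, mul_div_assoc, add_comm] using this.neg
  have hsum := hmain.add hprefactor
  rw [add_zero] at hsum
  refine hsum.congr' ?_
  filter_upwards [eventually_gt_atTop 0] with t ht
  have hI := setIntegral_pos_of_forall_pos measurableSet_Ioi (by simp)
    (integrableOn_rpow_mul_exp_neg_mul_rpowPhase (β := β) hκ hc₁ hc₃ hγ (rpow_pos_of_pos ht ρ))
    (fun q (hq : 0 < q) => by positivity)
  rw [Function.comp_apply, integral_rpow_mul_exp_neg_eq_rpow_mul_integral hβκ.ne' ht,
    log_mul hc₂.ne' (by positivity), log_mul (by positivity) hI.ne', log_rpow (by positivity),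
    log_rpow ht]
  ring
end
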